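/- arXiv:1710.08653 — 3 statements merged into one kernel-verified Lean document; each statement's English description precedes it below -/
import Mathlib

section
/- Let x ∈ H₂(ℂ₀⁺) and let β ∈ ℂ₀⁺. Then the function y defined on ℂ₀⁺ by y(s) = (x(s) − x(β))/(β − s) for s ≠ β and y(β) = −x′(β) belongs to H₂(ℂ₀⁺). -/
/-!
Up to sign, `y` is the difference quotient `dslope x β`, which is holomorphic on `ℂ₀⁺` by the
removable singularity theorem. On a closed disc of radius `δ` around `β` inside `ℂ₀⁺` it is bounded
by compactness; outside it, `|y s|² ≤ 2|x s|²/δ² + 2|x β|²/|s - β|²`, and `1/|s - β|²` is dominated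
by a multiple of the Cauchy kernel `(1 + (Im s - Im β)²)⁻¹`, whose integral along every vertical
line is the same finite number.
-/

open MeasureTheory Complex ENNReal
open Metric

noncomputable section

/-- Membership in the Hardy space `H₂(ℂ₀⁺)`: `f` is holomorphic on the right half-plane
`ℂ₀⁺ = {z : Re z > 0}` and `sup_{r>0} ∫_ℝ |f(r+iω)|² dω < ∞`. -/
def MemH2plus (f : ℂ → ℂ) : Prop :=
  DifferentiableOn ℂ f {z : ℂ | 0 < z.re} ∧
  ∃ M : ℝ≥0∞, M < ⊤ ∧ ∀ r : ℝ, 0 < r →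
    (∫⁻ ω : ℝ, (‖f (r + ω * Complex.I)‖₊ : ℝ≥0∞) ^ 2) ≤ M

theorem MemH2plus.of_sq_norm_le {f x : ℂ → ℂ} {c : ℝ} {h : ℝ → ℝ} (hx : MemH2plus x)
    (hf : DifferentiableOn ℂ f {z : ℂ | 0 < z.re}) (hc : 0 ≤ c) (hh : Integrable h)
    (hle : ∀ s : ℂ, 0 < s.re → ‖f s‖ ^ 2 ≤ c * ‖x s‖ ^ 2 + h s.im) : MemH2plus f := by
  obtain ⟨M, hM, hxM⟩ := hx.2
  have enorm_sq (z : ℂ) : (‖z‖₊ : ℝ≥0∞) ^ 2 = ENNReal.ofReal (‖z‖ ^ 2) := by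
    rw [ENNReal.ofReal_pow (norm_nonneg z), ofReal_norm, enorm_eq_nnnorm]
  refine ⟨hf, ENNReal.ofReal c * M + ∫⁻ ω, ENNReal.ofReal (h ω), ?_, fun r hr => ?_⟩
  · exact ENNReal.add_lt_top.2 ⟨ENNReal.mul_lt_top ENNReal.ofReal_lt_top hM,
      hh.lintegral_lt_top⟩
  have hpt (ω : ℝ) : (‖f (r + ω * I)‖₊ : ℝ≥0∞) ^ 2 ≤
      ENNReal.ofReal c * (‖x (r + ω * I)‖₊ : ℝ≥0∞) ^ 2 + ENNReal.ofReal (h ω) := by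
    have hs := hle (r + ω * I) (by simpa using hr)
    simp only [add_im, ofReal_im, mul_im, ofReal_re, I_im, mul_one, I_re, mul_zero, add_zero,
      zero_add] at hs
    rw [enorm_sq, enorm_sq, ← ENNReal.ofReal_mul hc]
    exact (ENNReal.ofReal_le_ofReal hs).trans ENNReal.ofReal_add_le
  calc (∫⁻ ω : ℝ, (‖f (r + ω * I)‖₊ : ℝ≥0∞) ^ 2)
      ≤ ∫⁻ ω : ℝ, ENNReal.ofReal c * (‖x (r + ω * I)‖₊ : ℝ≥0∞) ^ 2 + ENNReal.ofReal (h ω) :=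
        lintegral_mono hpt
    _ = ENNReal.ofReal c * (∫⁻ ω : ℝ, (‖x (r + ω * I)‖₊ : ℝ≥0∞) ^ 2) +
          ∫⁻ ω, ENNReal.ofReal (h ω) := by
        rw [lintegral_add_right' _ hh.aemeasurable.ennreal_ofReal,
          lintegral_const_mul' _ _ ENNReal.ofReal_ne_top]
    _ ≤ _ := by gcongr; exact hxM r hr

theorem closedBall_subset_re_pos {β : ℂ} {δ : ℝ} (hδ : δ < β.re) :
    closedBall β δ ⊆ {z : ℂ | 0 < z.re} := by
  intro s hs
  have hre := abs_le.1 ((abs_re_le_norm (s - β)).trans (mem_closedBall_iff_norm.1 hs))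
  rw [sub_re] at hre
  show 0 < s.re
  linarith [hre.1]

theorem norm_dslope_le {f : ℂ → ℂ} {β s : ℂ} (hs : s ≠ β) :
    ‖dslope f β s‖ ≤ (‖f s‖ + ‖f β‖) / ‖s - β‖ := by
  rw [dslope_of_ne _ hs, slope_def_field, norm_div]
  gcongr
  exact norm_sub_le _ _

theorem sq_norm_dslope_le {f : ℂ → ℂ} {β : ℂ} {δ C : ℝ} (hδ : 0 < δ)
    (hC : ∀ s ∈ closedBall β δ, ‖dslope f β s‖ ≤ C) (s : ℂ) :
    ‖dslope f β s‖ ^ 2 ≤ 2 / δ ^ 2 * ‖f s‖ ^ 2 +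
      ((1 + δ ^ 2) * C ^ 2 + 2 * (1 + (δ ^ 2)⁻¹) * ‖f β‖ ^ 2) * (1 + (s.im - β.im) ^ 2)⁻¹ := by
  set ρ := ‖s - β‖
  set k := (1 + (s.im - β.im) ^ 2)⁻¹
  have him : (s.im - β.im) ^ 2 ≤ ρ ^ 2 := by
    simpa [sq_abs] using pow_le_pow_left₀ (abs_nonneg _) (abs_im_le_norm (s - β)) 2
  have hpos : 0 < 1 + (s.im - β.im) ^ 2 := by positivity
  rcases le_or_gt ρ δ with hnear | hfar
  · have hd : ‖dslope f β s‖ ^ 2 ≤ C ^ 2 :=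
      pow_le_pow_left₀ (norm_nonneg _) (hC s (mem_closedBall_iff_norm.2 hnear)) 2
    have hkernel : C ^ 2 ≤ (1 + δ ^ 2) * C ^ 2 * k := by
      rw [le_mul_inv_iff₀ hpos]
      nlinarith [sq_nonneg C, pow_le_pow_left₀ (norm_nonneg _) hnear 2]
    have hfs : 0 ≤ 2 / δ ^ 2 * ‖f s‖ ^ 2 := by positivity
    have hfβ : 0 ≤ 2 * (1 + (δ ^ 2)⁻¹) * ‖f β‖ ^ 2 * k := by positivity
    linarith [add_mul ((1 + δ ^ 2) * C ^ 2) (2 * (1 + (δ ^ 2)⁻¹) * ‖f β‖ ^ 2) k]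
  · have hρ : 0 < ρ := hδ.trans hfar
    have hs : s ≠ β := sub_ne_zero.1 (norm_pos_iff.1 hρ)
    have hd : ‖dslope f β s‖ ^ 2 ≤ ((‖f s‖ + ‖f β‖) / ρ) ^ 2 :=
      pow_le_pow_left₀ (norm_nonneg _) (norm_dslope_le hs) 2
    have hfs : ‖f s‖ ^ 2 / ρ ^ 2 ≤ ‖f s‖ ^ 2 / δ ^ 2 := by gcongr
    have hkernel : 1 / ρ ^ 2 ≤ (1 + (δ ^ 2)⁻¹) * k := by
      rw [← div_eq_mul_inv, div_le_div_iff₀ (by positivity) hpos, one_mul, add_mul,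
        inv_mul_eq_div, one_mul]
      linarith [(one_le_div (by positivity)).2 (pow_le_pow_left₀ hδ.le hfar.le 2)]
    have hsplit : ((‖f s‖ + ‖f β‖) / ρ) ^ 2 ≤
        2 * (‖f s‖ ^ 2 / ρ ^ 2) + 2 * ‖f β‖ ^ 2 * (1 / ρ ^ 2) := by
      rw [div_pow, mul_one_div, ← mul_div_assoc, ← add_div]
      gcongr
      nlinarith [sq_nonneg (‖f s‖ - ‖f β‖)]
    have hC : 0 ≤ (1 + δ ^ 2) * C ^ 2 * k := by positivity
    calc ‖dslope f β s‖ ^ 2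
        ≤ 2 * (‖f s‖ ^ 2 / ρ ^ 2) + 2 * ‖f β‖ ^ 2 * (1 / ρ ^ 2) := hd.trans hsplit
      _ ≤ 2 * (‖f s‖ ^ 2 / δ ^ 2) + 2 * ‖f β‖ ^ 2 * ((1 + (δ ^ 2)⁻¹) * k) := by gcongr
      _ = 2 / δ ^ 2 * ‖f s‖ ^ 2 + 2 * (1 + (δ ^ 2)⁻¹) * ‖f β‖ ^ 2 * k := by ring
      _ ≤ _ := by rw [add_mul]; linarith

theorem ite_eq_neg_dslope (f : ℂ → ℂ) (β : ℂ) :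
    (fun s : ℂ => if s = β then -deriv f β else (f s - f β) / (β - s)) =
      fun s => -dslope f β s := by
  funext s
  by_cases hs : s = β
  · simp [hs]
  · rw [if_neg hs, dslope_of_ne _ hs, slope_def_field, ← neg_sub s β, div_neg]

/-- Let `x ∈ H₂(ℂ₀⁺)` and let `β ∈ ℂ₀⁺`.  Then the function `y` defined
on `ℂ₀⁺` by `y(s) = (x(s) − x(β))/(β − s)` for `s ≠ β` and `y(β) = −x′(β)` belongs to
`H₂(ℂ₀⁺)`. -/
theorem statement1 (x : ℂ → ℂ) (hx : MemH2plus x) (β : ℂ) (hβ : 0 < β.re) :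
    MemH2plus (fun s : ℂ => if s = β then -deriv x β else (x s - x β) / (β - s)) := by
  set δ := β.re / 2
  have hδ : 0 < δ := by positivity
  have hdiff : DifferentiableOn ℂ (dslope x β) {z : ℂ | 0 < z.re} :=
    (differentiableOn_dslope ((isOpen_lt continuous_const continuous_re).mem_nhds hβ)).2 hx.1
  obtain ⟨C, hC⟩ := (isCompact_closedBall β δ).exists_bound_of_continuousOn
    (hdiff.continuousOn.mono (closedBall_subset_re_pos (half_lt_self hβ)))
  set K := (1 + δ ^ 2) * C ^ 2 + 2 * (1 + (δ ^ 2)⁻¹) * ‖x β‖ ^ 2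
  rw [ite_eq_neg_dslope]
  refine hx.of_sq_norm_le (c := 2 / δ ^ 2) (h := fun t => K * (1 + (t - β.im) ^ 2)⁻¹)
    hdiff.neg (by positivity) ((integrable_inv_one_add_sq.comp_sub_right β.im).const_mul K) fun s _ => ?_
  rw [norm_neg]
  exact sq_norm_dslope_le hδ hC s

end
end

section
/- Let H be a complex Hilbert space, let A be a bounded linear operator on H with A* = −A, and let b ∈ H. For every s ∈ ℂ with Re s > 0, the operator L_s := s·I − A + (1/2)·(b⊗b), where (b⊗b)x = ⟨x, b⟩·b, is boundedly invertible, and the complex number G(s) := 1 − ⟨L_s⁻¹ b, b⟩ satisfies |G(s)| ≤ 1. -/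
open ContinuousLinearMap
open scoped InnerProductSpace

/-!
Write `L = s•I − A + ½ b⊗b`. Since `A` is skew-adjoint, `Re ⟨L x, x⟩ = Re s ‖x‖² + ½ |⟨b, x⟩|²`,
so `L` is coercive, hence invertible (Lax–Milgram). For `x = L⁻¹ b` and `c = ⟨L⁻¹ b, b⟩` this
identity gives `|c|² ≤ 2 Re c`, which is exactly `|1 − c|² ≤ 1`.
-/

section

variable {𝕜 H : Type*} [RCLike 𝕜] [NormedAddCommGroup H] [InnerProductSpace 𝕜 H]

open RCLike

theorem ContinuousLinearMap.re_inner_map_self_eq_zero_of_adjoint_eq_neg [CompleteSpace H]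
    {A : H →L[𝕜] H} (hA : adjoint A = -A) (x : H) : re ⟪A x, x⟫_𝕜 = 0 := by
  have h : ⟪A x, x⟫_𝕜 = -⟪x, A x⟫_𝕜 := by
    rw [← adjoint_inner_left, hA, neg_apply, inner_neg_left, neg_neg]
  have h' := congrArg re h
  rw [map_neg, ← inner_conj_symm x, conj_re] at h'
  linarith

theorem ContinuousLinearMap.isUnit_of_forall_mul_sq_norm_le_re_inner_map [CompleteSpace H]
    (L : H →L[𝕜] H) {c : ℝ} (hc : 0 < c) (h : ∀ x, c * ‖x‖ ^ 2 ≤ re ⟪L x, x⟫_𝕜) : IsUnit L :=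
  L.isUnit_of_forall_le_norm_inner_map (c := c.toNNReal) (by simpa using hc) fun x => by
    rw [Real.coe_toNNReal c hc.le, mul_comm]
    exact (h x).trans (re_le_norm _)

end

theorem Complex.norm_one_sub_le_one_of_sq_norm_le_two_mul_re {c : ℂ} (h : ‖c‖ ^ 2 ≤ 2 * c.re) :
    ‖1 - c‖ ≤ 1 := by
  have hsq : ‖1 - c‖ ^ 2 = 1 - 2 * c.re + ‖c‖ ^ 2 := by
    simp only [Complex.sq_norm, Complex.normSq_apply, Complex.sub_re, Complex.sub_im,
      Complex.one_re, Complex.one_im]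
    ring
  nlinarith [norm_nonneg (1 - c)]

theorem re_inner_smul_sub_add_rankOne_apply_self {H : Type*} [NormedAddCommGroup H]
    [InnerProductSpace ℂ H] [CompleteSpace H] {A : H →L[ℂ] H} (hA : adjoint A = -A)
    (b : H) (s : ℂ) (x : H) :
    (⟪(s • (1 : H →L[ℂ] H) - A + ((1 : ℂ)/2) • (toSpanSingleton ℂ b).comp (innerSL ℂ b)) x,
      x⟫_ℂ).re = s.re * ‖x‖ ^ 2 + ‖⟪b, x⟫_ℂ‖ ^ 2 / 2 := by
  have hskew := re_inner_map_self_eq_zero_of_adjoint_eq_neg hA x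
  rw [RCLike.re_to_complex] at hskew
  simp only [add_apply, sub_apply, smul_apply, one_apply_eq_self, comp_apply, innerSL_apply_apply,
    toSpanSingleton_apply, inner_add_left, inner_sub_left, inner_smul_left,
    inner_self_eq_norm_sq_to_K, Complex.coe_algebraMap, ← Complex.normSq_eq_conj_mul_self,
    Complex.normSq_eq_norm_sq, ← Complex.ofReal_pow, Complex.add_re, Complex.sub_re, hskew,
    Complex.re_mul_ofReal, Complex.conj_re, map_div₀, map_one, map_ofNat]
  norm_num
  ring

/-- Let `H` be a complex Hilbert space, `A` a bounded operator on `H`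
with `A* = −A`, and `b ∈ H`.  For every `s ∈ ℂ` with `Re s > 0`, the operator
`L_s := s·I − A + (1/2)·(b⊗b)`, where `(b⊗b)x = ⟨x,b⟩·b` (inner product linear in the
first argument, so `(b⊗b)x = ⟪b,x⟫·b` in Mathlib's convention), is boundedly invertible,
and `G(s) := 1 − ⟨L_s⁻¹ b, b⟩` satisfies `|G(s)| ≤ 1`. -/
theorem statement15 {H : Type*} [NormedAddCommGroup H] [InnerProductSpace ℂ H]
    [CompleteSpace H] (A : H →L[ℂ] H) (hA : adjoint A = -A) (b : H)
    (s : ℂ) (hs : 0 < s.re) :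
    ∃ Linv : H →L[ℂ] H,
      Linv.comp (s • (1 : H →L[ℂ] H) - A +
          ((1 : ℂ)/2) • (toSpanSingleton ℂ b).comp (innerSL ℂ b)) = 1 ∧
      (s • (1 : H →L[ℂ] H) - A +
          ((1 : ℂ)/2) • (toSpanSingleton ℂ b).comp (innerSL ℂ b)).comp Linv = 1 ∧
      ‖(1 : ℂ) - (inner ℂ b (Linv b) : ℂ)‖ ≤ 1 := by
  set L : H →L[ℂ] H := s • (1 : H →L[ℂ] H) - A +
      ((1 : ℂ)/2) • (toSpanSingleton ℂ b).comp (innerSL ℂ b)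
  have hre : ∀ x, (⟪L x, x⟫_ℂ).re = s.re * ‖x‖ ^ 2 + ‖⟪b, x⟫_ℂ‖ ^ 2 / 2 :=
    re_inner_smul_sub_add_rankOne_apply_self hA b s
  have hL : IsUnit L := L.isUnit_of_forall_mul_sq_norm_le_re_inner_map hs fun x => by
    rw [RCLike.re_to_complex, hre]
    linarith [sq_nonneg ‖⟪b, x⟫_ℂ‖]
  refine ⟨↑hL.unit⁻¹, hL.unit.inv_mul, hL.unit.mul_inv, ?_⟩
  set x := (↑hL.unit⁻¹ : H →L[ℂ] H) b
  have hLx : L x = b := congrArg (· b) hL.unit.mul_inv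
  apply Complex.norm_one_sub_le_one_of_sq_norm_le_two_mul_re
  have hre_x := hre x
  rw [hLx] at hre_x
  linarith [mul_nonneg hs.le (sq_nonneg ‖x‖)]
end

section
/- Let H be a complex Hilbert space, let A be a bounded linear operator on H with A* = −A, and let b ∈ H. For every ω ∈ ℝ such that the operator L_{iω} := iω·I − A + (1/2)·(b⊗b), where (b⊗b)x = ⟨x, b⟩·b, is boundedly invertible, the complex number G(iω) := 1 − ⟨L_{iω}⁻¹ b, b⟩ satisfies |G(iω)| = 1. -/
/-! Put `x = L⁻¹ b` and `g = ⟪b, x⟫`. Since `iω - A` is skew-adjoint, pairing `L x = b` with `x`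
and taking real parts kills every term except `½ |g|² = Re g`, which says `|1 - g|² = 1`. -/

open ContinuousLinearMap

open scoped InnerProductSpace ComplexConjugate

section

variable {𝕜 H : Type*} [RCLike 𝕜] [NormedAddCommGroup H] [InnerProductSpace 𝕜 H] [CompleteSpace H]

theorem ContinuousLinearMap.re_inner_map_self_eq_zero_of_adjoint_eq_neg_s16 {S : H →L[𝕜] H}
    (hS : adjoint S = -S) (x : H) : RCLike.re ⟪x, S x⟫_𝕜 = 0 := by
  have hswap : ⟪x, S x⟫_𝕜 = -⟪S x, x⟫_𝕜 := by
    rw [← adjoint_inner_left, hS, neg_apply, inner_neg_left]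
  have hre := congrArg RCLike.re hswap
  rw [map_neg, inner_re_symm] at hre
  rw [inner_re_symm]
  linarith

theorem ContinuousLinearMap.adjoint_smul_one_sub_eq_neg {A : H →L[𝕜] H} (hA : adjoint A = -A)
    {c : 𝕜} (hc : conj c = -c) : adjoint (c • 1 - A) = -(c • 1 - A) := by
  rw [map_sub, map_smulₛₗ, adjoint_one, hA, hc, neg_smul, neg_sub, sub_neg_eq_add, neg_add_eq_sub]

theorem norm_inner_sq_eq_two_mul_re_of_apply_add_half_smul_eq {S : H →L[𝕜] H}
    (hS : adjoint S = -S) {b x : H} (hx : S x + (1 / 2 : 𝕜) • ⟪b, x⟫_𝕜 • b = b) :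
    ‖⟪b, x⟫_𝕜‖ ^ 2 = 2 * RCLike.re ⟪b, x⟫_𝕜 := by
  have h := congrArg (fun y => RCLike.re ⟪x, y⟫_𝕜) hx
  simp only [inner_add_right, inner_smul_right, map_add,
    S.re_inner_map_self_eq_zero_of_adjoint_eq_neg_s16 hS x] at h
  rw [← inner_conj_symm x b, RCLike.mul_conj, RCLike.conj_re, zero_add, one_div_mul_eq_div,
    ← RCLike.ofReal_pow, ← RCLike.ofReal_ofNat 2, ← RCLike.ofReal_div, RCLike.ofReal_re] at h
  linarith

end

theorem Complex.norm_one_sub_eq_one_of_sq_norm_eq_two_mul_re {z : ℂ} (hz : ‖z‖ ^ 2 = 2 * z.re) :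
    ‖1 - z‖ = 1 := by
  rw [← pow_eq_one_iff_of_nonneg (norm_nonneg _) two_ne_zero, Complex.sq_norm, Complex.normSq_sub,
    ← Complex.sq_norm z, hz]
  simp

theorem statement16_general {H : Type*} [NormedAddCommGroup H] [InnerProductSpace ℂ H]
    [CompleteSpace H] (A : H →L[ℂ] H) (hA : adjoint A = -A) (b : H)
    (ω : ℝ) (Linv : H →L[ℂ] H)
    (h2 : (((ω : ℂ) * Complex.I) • (1 : H →L[ℂ] H) - A +
        ((1 : ℂ)/2) • (toSpanSingleton ℂ b).comp (innerSL ℂ b)).comp Linv = 1) :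
    ‖(1 : ℂ) - (inner ℂ b (Linv b) : ℂ)‖ = 1 := by
  have hS : adjoint (((ω : ℂ) * Complex.I) • 1 - A) = -(((ω : ℂ) * Complex.I) • 1 - A) :=
    adjoint_smul_one_sub_eq_neg hA (by simp)
  have hx : (((ω : ℂ) * Complex.I) • 1 - A) (Linv b) + (1 / 2 : ℂ) • ⟪b, Linv b⟫_ℂ • b = b := by
    simpa using congrArg (· b) h2
  exact Complex.norm_one_sub_eq_one_of_sq_norm_eq_two_mul_re
    (norm_inner_sq_eq_two_mul_re_of_apply_add_half_smul_eq hS hx)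

/-- Let `H` be a complex Hilbert space, `A` a bounded operator on `H`
with `A* = −A`, and `b ∈ H`.  For every `ω ∈ ℝ` such that
`L_{iω} := iω·I − A + (1/2)·(b⊗b)`, where `(b⊗b)x = ⟨x,b⟩·b` (inner product linear in the
first argument, so `(b⊗b)x = ⟪b,x⟫·b` in Mathlib's convention), is boundedly invertible,
the number `G(iω) := 1 − ⟨L_{iω}⁻¹ b, b⟩` satisfies `|G(iω)| = 1`. -/
theorem statement16 {H : Type*} [NormedAddCommGroup H] [InnerProductSpace ℂ H]
    [CompleteSpace H] (A : H →L[ℂ] H) (hA : adjoint A = -A) (b : H)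
    (ω : ℝ) (Linv : H →L[ℂ] H)
    (h1 : Linv.comp (((ω : ℂ) * Complex.I) • (1 : H →L[ℂ] H) - A +
        ((1 : ℂ)/2) • (toSpanSingleton ℂ b).comp (innerSL ℂ b)) = 1)
    (h2 : (((ω : ℂ) * Complex.I) • (1 : H →L[ℂ] H) - A +
        ((1 : ℂ)/2) • (toSpanSingleton ℂ b).comp (innerSL ℂ b)).comp Linv = 1) :
    ‖(1 : ℂ) - (inner ℂ b (Linv b) : ℂ)‖ = 1 :=
  statement16_general A hA b ω Linv h2
end
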